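/- arXiv:2209.04621 — 2 statements merged into one kernel-verified Lean document; each statement's English description precedes it below -/
import Mathlib

section
/- Let N ≥ 1, let Q be a real symmetric positive semidefinite d×d matrix, A ∈ ℝ^{d×d} with ‖A‖ ≤ α for some α > 0, B ∈ ℝ^{d×m}, and for each k ∈ {0,…,N−1} let S_k be a real symmetric positive definite m×m matrix. Define matrices P_N, P_{N−1}, …, P_0 backward by P_N = Q and P_k = AᵀP_{k+1}A + Q − AᵀP_{k+1}B (BᵀP_{k+1}B + S_k)^{−1} BᵀP_{k+1}A. Then every P_k is symmetric positive semidefinite, and for every p ∈ {0,…,N}, ‖P_{N−p}‖ ≤ ( Σ_{j=0}^{p} α^{2j} ) ‖Q‖, where ‖·‖ is the operator (spectral) norm induced by the Euclidean norm. -/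
open Finset Matrix

/-- The operator norm of a matrix induced by the Euclidean norms. -/
noncomputable def matNorm {d m : ℕ} (M : Matrix (Fin d) (Fin m) ℝ) : ℝ :=
  ‖LinearMap.toContinuousLinearMap (Matrix.toEuclideanLin M)‖

/-!
Each backward step of the recursion is `P ↦ Q + (AᵀPA − AᵀPB (BᵀPB + S)⁻¹ BᵀPA)`, and the bracket
is the Schur complement of the upper-left block of the positive semidefinite matrix
`[B A]ᵀ P [B A] + diag(S, 0)`. Hence `Q ≤ P_k ≤ AᵀP_{k+1}A + Q` in the Loewner order. The spectral
norm of a positive semidefinite matrix is its largest Rayleigh quotient, so it is monotone in the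
Loewner order, and `‖P_k‖ ≤ α² ‖P_{k+1}‖ + ‖Q‖`; backward induction from `P_N = Q` gives the bound.
-/

open scoped ComplexOrder MatrixOrder Matrix.Norms.L2Operator

namespace ContinuousLinearMap

variable {𝕜 E : Type*} [RCLike 𝕜] [NormedAddCommGroup E] [InnerProductSpace 𝕜 E]

/-- For positive `T`, `‖T‖` is the supremum of its Rayleigh quotients, which grow with `T`. -/
theorem norm_le_norm_of_nonneg_of_le {T U : E →L[𝕜] E} (hT : 0 ≤ T) (hTU : T ≤ U) :
    ‖T‖ ≤ ‖U‖ := by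
  rw [nonneg_iff_isPositive] at hT
  rw [le_def] at hTU
  rw [T.norm_eq_iSup_rayleighQuotient hT.isSymmetric]
  refine ciSup_le fun x => ?_
  have hTx : 0 ≤ T.rayleighQuotient x := div_nonneg (hT.re_inner_nonneg_left x) (sq_nonneg _)
  have hTUx : T.rayleighQuotient x ≤ U.rayleighQuotient x := by
    rw [← sub_add_cancel U T, rayleighQuotient_add, le_add_iff_nonneg_left]
    exact div_nonneg (hTU.re_inner_nonneg_left x) (sq_nonneg _)
  calc |T.rayleighQuotient x| = T.rayleighQuotient x := abs_of_nonneg hTx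
    _ ≤ |U.rayleighQuotient x| := hTUx.trans (le_abs_self _)
    _ ≤ ‖U‖ := U.rayleighQuotient_le_norm x

end ContinuousLinearMap

namespace Matrix

section L2OpNorm

variable {𝕜 n : Type*} [RCLike 𝕜] [Fintype n] [DecidableEq n]

theorem isPositive_toEuclideanCLM_iff {X : Matrix n n 𝕜} :
    (toEuclideanCLM (n := n) (𝕜 := 𝕜) X).IsPositive ↔ X.PosSemidef := by
  rw [← ContinuousLinearMap.isPositive_toLinearMap_iff, coe_toEuclideanCLM_eq_toEuclideanLin,
    isPositive_toEuclideanLin_iff]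

theorem l2_opNorm_le_of_nonneg_of_le {X Y : Matrix n n 𝕜} (hX : 0 ≤ X) (hXY : X ≤ Y) :
    ‖X‖ ≤ ‖Y‖ := by
  rw [← l2_opNorm_toEuclideanCLM, ← l2_opNorm_toEuclideanCLM]
  refine ContinuousLinearMap.norm_le_norm_of_nonneg_of_le ?_ ?_
  · rw [ContinuousLinearMap.nonneg_iff_isPositive, isPositive_toEuclideanCLM_iff]
    exact hX.posSemidef
  · rw [ContinuousLinearMap.le_def, ← map_sub, isPositive_toEuclideanCLM_iff]
    exact hXY

end L2OpNorm

variable {n m : Type*} [Fintype n] {P : Matrix n n ℝ}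

theorem IsHermitian.conjTranspose_transpose_mul_mul (hP : P.IsHermitian) (A : Matrix n n ℝ)
    (B : Matrix n m ℝ) : (Bᵀ * P * A)ᴴ = Aᵀ * P * B := by
  rw [conjTranspose_eq_transpose_of_trivial, transpose_mul, transpose_mul, transpose_transpose,
    ← conjTranspose_eq_transpose_of_trivial P, hP.eq, Matrix.mul_assoc]

variable [Fintype m]

theorem PosSemidef.transpose_mul_mul_add_posDef (hP : P.PosSemidef) (B : Matrix n m ℝ)
    {S : Matrix m m ℝ} (hS : S.PosDef) : (Bᵀ * P * B + S).PosDef := by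
  refine PosDef.posSemidef_add ?_ hS
  simpa only [conjTranspose_eq_transpose_of_trivial] using hP.conjTranspose_mul_mul_same B

end Matrix

section Riccati

variable {n m : Type*} [Fintype n] [Fintype m] [DecidableEq m]

noncomputable def riccatiMap (A : Matrix n n ℝ) (B : Matrix n m ℝ) (Q : Matrix n n ℝ)
    (S : Matrix m m ℝ) (P : Matrix n n ℝ) : Matrix n n ℝ :=
  Aᵀ * P * A + Q - Aᵀ * P * B * (Bᵀ * P * B + S)⁻¹ * (Bᵀ * P * A)

variable {A : Matrix n n ℝ} {B : Matrix n m ℝ} {Q : Matrix n n ℝ} {S : Matrix m m ℝ}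
  {P : Matrix n n ℝ}

/-- The block matrix is `[B A]ᵀ P [B A] + diag(S, 0)`; the Riccati correction is the Schur
complement of its upper-left block. -/
theorem posSemidef_fromBlocks_riccati (hP : P.PosSemidef) (hS : S.PosSemidef) :
    (fromBlocks (Bᵀ * P * B + S) (Bᵀ * P * A) (Aᵀ * P * B) (Aᵀ * P * A)).PosSemidef := by
  have hblocks : fromBlocks (Bᵀ * P * B + S) (Bᵀ * P * A) (Aᵀ * P * B) (Aᵀ * P * A)
      = (fromCols B A)ᵀ * P * fromCols B A
        + (fromCols (1 : Matrix m m ℝ) (0 : Matrix m n ℝ))ᵀ * S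
          * fromCols (1 : Matrix m m ℝ) (0 : Matrix m n ℝ) := by
    rw [transpose_fromCols, fromRows_mul, fromRows_mul_fromCols, transpose_fromCols, fromRows_mul,
      fromRows_mul_fromCols, fromBlocks_add]
    simp
  rw [hblocks, ← conjTranspose_eq_transpose_of_trivial, ← conjTranspose_eq_transpose_of_trivial]
  exact (hP.conjTranspose_mul_mul_same _).add (hS.conjTranspose_mul_mul_same _)

theorem le_riccatiMap (hP : P.PosSemidef) (hS : S.PosDef) : Q ≤ riccatiMap A B Q S P := by
  have hM := hP.transpose_mul_mul_add_posDef B hS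
  have := hM.isUnit.invertible
  have hW := hP.isHermitian.conjTranspose_transpose_mul_mul A B
  have hSchur := (hM.fromBlocks₁₁ (Bᵀ * P * A) (Aᵀ * P * A)).1
    (hW ▸ posSemidef_fromBlocks_riccati hP hS.posSemidef)
  have hsub : riccatiMap A B Q S P - Q
      = Aᵀ * P * A - Aᵀ * P * B * (Bᵀ * P * B + S)⁻¹ * (Bᵀ * P * A) := by
    rw [riccatiMap]
    abel
  rw [le_iff, hsub, ← hW]
  exact hSchur

theorem riccatiMap_le (hP : P.PosSemidef) (hS : S.PosDef) :
    riccatiMap A B Q S P ≤ Aᵀ * P * A + Q := by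
  rw [le_iff, riccatiMap, sub_sub_cancel, ← hP.isHermitian.conjTranspose_transpose_mul_mul]
  exact (hP.transpose_mul_mul_add_posDef B hS).inv.posSemidef.conjTranspose_mul_mul_same _

theorem norm_riccatiMap_le [DecidableEq n] (hP : P.PosSemidef) (hQ : Q.PosSemidef)
    (hS : S.PosDef) : ‖riccatiMap A B Q S P‖ ≤ ‖A‖ ^ 2 * ‖P‖ + ‖Q‖ := by
  have hAT : ‖Aᵀ‖ = ‖A‖ := by
    rw [← conjTranspose_eq_transpose_of_trivial, l2_opNorm_conjTranspose]
  calc ‖riccatiMap A B Q S P‖ ≤ ‖Aᵀ * P * A + Q‖ :=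
        l2_opNorm_le_of_nonneg_of_le (hQ.nonneg.trans (le_riccatiMap hP hS)) (riccatiMap_le hP hS)
    _ ≤ ‖Aᵀ‖ * ‖P‖ * ‖A‖ + ‖Q‖ := by
        grw [norm_add_le, l2_opNorm_mul, l2_opNorm_mul]
    _ = ‖A‖ ^ 2 * ‖P‖ + ‖Q‖ := by
        rw [hAT]
        ring

end Riccati

theorem matNorm_eq {d m : ℕ} (M : Matrix (Fin d) (Fin m) ℝ) : matNorm M = ‖M‖ := rfl

theorem sum_range_succ_pow_two_mul {R : Type*} [Semiring R] (x : R) (p : ℕ) :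
    ∑ j ∈ range (p + 1), x ^ (2 * j) = x ^ 2 * ∑ j ∈ range p, x ^ (2 * j) + 1 := by
  simp only [pow_mul]
  exact geom_sum_succ

theorem stmt_8_general {d m : ℕ} (N : ℕ)
    (Q : Matrix (Fin d) (Fin d) ℝ) (hQ : Q.PosSemidef)
    (A : Matrix (Fin d) (Fin d) ℝ) (α : ℝ) (hA : matNorm A ≤ α)
    (B : Matrix (Fin d) (Fin m) ℝ)
    (S : ℕ → Matrix (Fin m) (Fin m) ℝ) (hS : ∀ k, k < N → (S k).PosDef)
    (P : ℕ → Matrix (Fin d) (Fin d) ℝ)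
    (hPN : P N = Q)
    (hPrec : ∀ k, k < N → P k = Aᵀ * P (k + 1) * A + Q
      - Aᵀ * P (k + 1) * B * (Bᵀ * P (k + 1) * B + S k)⁻¹ * (Bᵀ * P (k + 1) * A)) :
    (∀ k, k ≤ N → (P k).PosSemidef) ∧
    (∀ p, p ≤ N → matNorm (P (N - p)) ≤ (∑ j ∈ range (p + 1), α ^ (2 * j)) * matNorm Q) := by
  simp only [matNorm_eq] at hA ⊢
  have key : ∀ p ≤ N, (P (N - p)).PosSemidef ∧
      ‖P (N - p)‖ ≤ (∑ j ∈ range (p + 1), α ^ (2 * j)) * ‖Q‖ := by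
    intro p
    induction p with
    | zero => simpa [hPN] using hQ
    | succ p ih =>
      intro hp
      obtain ⟨hPSD, hnorm⟩ := ih (by omega)
      have hstep : P (N - (p + 1)) = riccatiMap A B Q (S (N - (p + 1))) (P (N - p)) := by
        rw [hPrec _ (by omega), show N - (p + 1) + 1 = N - p by omega, riccatiMap]
      have hSp := hS _ (show N - (p + 1) < N by omega)
      rw [hstep, sum_range_succ_pow_two_mul]
      refine ⟨hQ.nonneg.trans (le_riccatiMap hPSD hSp) |>.posSemidef, ?_⟩
      calc _ ≤ ‖A‖ ^ 2 * ‖P (N - p)‖ + ‖Q‖ := norm_riccatiMap_le hPSD hQ hSp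
        _ ≤ α ^ 2 * ((∑ j ∈ range (p + 1), α ^ (2 * j)) * ‖Q‖) + ‖Q‖ := by gcongr
        _ = _ := by ring
  refine ⟨fun k hk => ?_, fun p hp => (key p hp).2⟩
  simpa [Nat.sub_sub_self hk] using (key (N - k) (Nat.sub_le _ _)).1

/-- the backward Riccati iterates are positive semidefinite and satisfy the
norm estimate `‖P_{N−p}‖ ≤ (∑_{j=0}^{p} α^{2j}) ‖Q‖` (equation (37)). -/
theorem stmt_8 {d m : ℕ} (N : ℕ) (hN : 1 ≤ N)
    (Q : Matrix (Fin d) (Fin d) ℝ) (hQ : Q.PosSemidef)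
    (A : Matrix (Fin d) (Fin d) ℝ) (α : ℝ) (hα : 0 < α) (hA : matNorm A ≤ α)
    (B : Matrix (Fin d) (Fin m) ℝ)
    (S : ℕ → Matrix (Fin m) (Fin m) ℝ) (hS : ∀ k, k < N → (S k).PosDef)
    (P : ℕ → Matrix (Fin d) (Fin d) ℝ)
    (hPN : P N = Q)
    (hPrec : ∀ k, k < N → P k = Aᵀ * P (k + 1) * A + Q
      - Aᵀ * P (k + 1) * B * (Bᵀ * P (k + 1) * B + S k)⁻¹ * (Bᵀ * P (k + 1) * A)) :
    (∀ k, k ≤ N → (P k).PosSemidef) ∧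
    (∀ p, p ≤ N → matNorm (P (N - p)) ≤ (∑ j ∈ range (p + 1), α ^ (2 * j)) * matNorm Q) :=
  stmt_8_general N Q hQ A α hA B S hS P hPN hPrec
end

section
/- Fix n ≥ 1 and a horizon N ≥ 1. Let α, β, γ, ρ > 0 and δ_max > 0, and let C(0) > 0. For each i ∈ {1,…,n} let A_i ∈ ℝ^{d×d} with ‖A_i‖ ≤ α, B_i ∈ ℝ^{d×m} with ‖B_i‖ ≤ β, x_i(0) ∈ ℝ^d with ‖x_i(0)‖ ≤ γ, let P_i be a real symmetric positive semidefinite d×d matrix with ‖P_i‖ ≤ δ_max · Σ_{j=0}^{N−1} α^{2j}, let R_i be symmetric positive semidefinite, let H_i be symmetric, and let u_i ∈ ℝ^m with ‖u_i‖ ≤ √(C(0)/ρ). Suppose λ_0 = − (1/C(0)) Σ_{i=1}^{n} u_iᵀ B_iᵀ P_i A_i x_i(0) − (1/C(0)) Σ_{i=1}^{n} u_iᵀ ( B_iᵀ P_i B_i + R_i ) u_i. Then λ_0 ≤ (n / √(C(0) ρ)) · β γ δ_max · Σ_{t=1}^{N} α^{2t−1}. -/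
open Finset Matrix
open scoped RealInnerProductSpace

/-! By Cauchy–Schwarz and the operator-norm bounds, each cross term `-uᵢᵀBᵢᵀPᵢAᵢxᵢ(0)` is at most
`β √(C(0)/ρ) · δ_max (Σⱼ α^{2j}) · α γ`, while each quadratic term `uᵢᵀ(BᵢᵀPᵢBᵢ + Rᵢ)uᵢ` is
nonnegative and enters `λ₀` with a minus sign. Dividing by `C(0)` turns `√(C(0)/ρ)` into
`1/√(C(0)ρ)`, and `α Σ_{j<N} α^{2j} = Σ_{t=1}^{N} α^{2t-1}`. -/

lemma norm_toEuclideanLin_le {d m : ℕ} {M : Matrix (Fin d) (Fin m) ℝ}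
    {x : EuclideanSpace ℝ (Fin m)} {a c : ℝ} (hM : matNorm M ≤ a) (hx : ‖x‖ ≤ c) :
    ‖toEuclideanLin M x‖ ≤ a * c :=
  calc ‖toEuclideanLin M x‖ ≤ matNorm M * ‖x‖ :=
        (LinearMap.toContinuousLinearMap (toEuclideanLin M)).le_opNorm x
    _ ≤ a * c := mul_le_mul hM hx (norm_nonneg x) ((norm_nonneg _).trans hM)

lemma inner_toEuclideanLin_transpose_mul_mul {d e k m : ℕ} (B : Matrix (Fin d) (Fin m) ℝ)
    (P : Matrix (Fin d) (Fin k) ℝ) (A : Matrix (Fin k) (Fin e) ℝ)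
    (u : EuclideanSpace ℝ (Fin m)) (x : EuclideanSpace ℝ (Fin e)) :
    ⟪u, toEuclideanLin (Bᵀ * P * A) x⟫ =
      ⟪toEuclideanLin B u, toEuclideanLin P (toEuclideanLin A x)⟫ := by
  rw [← conjTranspose_eq_transpose_of_trivial, Matrix.mul_assoc, toLpLin_mul_same,
    LinearMap.comp_apply, toEuclideanLin_conjTranspose_eq_adjoint, LinearMap.adjoint_inner_right,
    toLpLin_mul_same, LinearMap.comp_apply]

lemma neg_inner_toEuclideanLin_transpose_mul_mul_le {d e k m : ℕ} {B : Matrix (Fin d) (Fin m) ℝ}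
    {P : Matrix (Fin d) (Fin k) ℝ} {A : Matrix (Fin k) (Fin e) ℝ}
    {u : EuclideanSpace ℝ (Fin m)} {x : EuclideanSpace ℝ (Fin e)} {b μ p a c : ℝ}
    (hB : matNorm B ≤ b) (hu : ‖u‖ ≤ μ) (hP : matNorm P ≤ p) (hA : matNorm A ≤ a)
    (hx : ‖x‖ ≤ c) :
    -⟪u, toEuclideanLin (Bᵀ * P * A) x⟫ ≤ b * μ * (p * (a * c)) := by
  have hBu := norm_toEuclideanLin_le hB hu
  have hPAx := norm_toEuclideanLin_le hP (norm_toEuclideanLin_le hA hx)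
  rw [inner_toEuclideanLin_transpose_mul_mul]
  calc _ ≤ |⟪toEuclideanLin B u, toEuclideanLin P (toEuclideanLin A x)⟫| := neg_le_abs _
    _ ≤ ‖toEuclideanLin B u‖ * ‖toEuclideanLin P (toEuclideanLin A x)‖ :=
        abs_real_inner_le_norm _ _
    _ ≤ b * μ * (p * (a * c)) := mul_le_mul hBu hPAx (norm_nonneg _) ((norm_nonneg _).trans hBu)

lemma inner_toEuclideanLin_transpose_mul_mul_add_nonneg {d m : ℕ} {B : Matrix (Fin d) (Fin m) ℝ}
    {P : Matrix (Fin d) (Fin d) ℝ} {R : Matrix (Fin m) (Fin m) ℝ} (hP : P.PosSemidef)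
    (hR : R.PosSemidef) (u : EuclideanSpace ℝ (Fin m)) :
    0 ≤ ⟪u, toEuclideanLin (Bᵀ * P * B + R) u⟫ := by
  have hBPB : (Bᵀ * P * B).PosSemidef := by
    simpa only [conjTranspose_eq_transpose_of_trivial] using hP.conjTranspose_mul_mul_same B
  exact (isPositive_toEuclideanLin_iff.mpr (hBPB.add hR)).inner_nonneg_right u

lemma sum_Icc_pow_two_mul_sub_one {R : Type*} [CommSemiring R] (α : R) (N : ℕ) :
    ∑ t ∈ Icc 1 N, α ^ (2 * t - 1) = α * ∑ j ∈ range N, α ^ (2 * j) := by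
  induction N with
  | zero => simp
  | succ N ih =>
    rw [sum_Icc_succ_top (by omega), ih, sum_range_succ,
      show 2 * (N + 1) - 1 = 2 * N + 1 by omega, pow_succ', mul_add]

lemma one_div_mul_sqrt_div {c : ℝ} (hc : 0 < c) (r : ℝ) :
    1 / c * √(c / r) = 1 / √(c * r) := by
  rw [Real.sqrt_div hc.le, Real.sqrt_mul hc.le]
  nth_rw 1 [← Real.mul_self_sqrt hc.le]
  field_simp

theorem stmt_10_general {d m : ℕ} (n N : ℕ)
    (α β γ ρ δmax : ℝ)
    (C0 : ℝ) (hC0 : 0 < C0)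
    (A : Fin n → Matrix (Fin d) (Fin d) ℝ) (hA : ∀ i, matNorm (A i) ≤ α)
    (B : Fin n → Matrix (Fin d) (Fin m) ℝ) (hB : ∀ i, matNorm (B i) ≤ β)
    (x0 : Fin n → EuclideanSpace ℝ (Fin d)) (hx0 : ∀ i, ‖x0 i‖ ≤ γ)
    (P : Fin n → Matrix (Fin d) (Fin d) ℝ) (hPsd : ∀ i, (P i).PosSemidef)
    (hPn : ∀ i, matNorm (P i) ≤ δmax * ∑ j ∈ range N, α ^ (2 * j))
    (R : Fin n → Matrix (Fin m) (Fin m) ℝ) (hR : ∀ i, (R i).PosSemidef)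
    (u : Fin n → EuclideanSpace ℝ (Fin m)) (hu : ∀ i, ‖u i‖ ≤ Real.sqrt (C0 / ρ))
    (lam0 : ℝ)
    (hlam0 : lam0 = -(1 / C0) * ∑ i, ⟪u i, Matrix.toEuclideanLin ((B i)ᵀ * P i * A i) (x0 i)⟫
      - (1 / C0) * ∑ i, ⟪u i, Matrix.toEuclideanLin ((B i)ᵀ * P i * B i + R i) (u i)⟫) :
    lam0 ≤ ((n : ℝ) / Real.sqrt (C0 * ρ)) * β * γ * δmax * ∑ t ∈ Icc 1 N, α ^ (2 * t - 1) := by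
  set D := ∑ j ∈ range N, α ^ (2 * j)
  set K := β * √(C0 / ρ) * (δmax * D * (α * γ))
  have hcross : -∑ i, ⟪u i, toEuclideanLin ((B i)ᵀ * P i * A i) (x0 i)⟫ ≤ n * K := by
    rw [← sum_neg_distrib]
    simpa using sum_le_card_nsmul univ _ K fun i _ ↦
      neg_inner_toEuclideanLin_transpose_mul_mul_le (hB i) (hu i) (hPn i) (hA i) (hx0 i)
  have hquad : 0 ≤ ∑ i, ⟪u i, toEuclideanLin ((B i)ᵀ * P i * B i + R i) (u i)⟫ :=
    sum_nonneg fun i _ ↦ inner_toEuclideanLin_transpose_mul_mul_add_nonneg (hPsd i) (hR i) (u i)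
  have hC0inv : 0 ≤ 1 / C0 := by positivity
  calc lam0 ≤ 1 / C0 * (n * K) := by
        rw [hlam0]; nlinarith [mul_le_mul_of_nonneg_left hcross hC0inv, mul_nonneg hC0inv hquad]
    _ = n * (1 / √(C0 * ρ)) * β * γ * δmax * (α * D) := by
        rw [← one_div_mul_sqrt_div hC0 ρ]; ring
    _ = _ := by rw [sum_Icc_pow_two_mul_sub_one, mul_one_div]

/-- the initial-time price bound (equation (41)) in the proof of Theorem 3. -/
theorem stmt_10 {d m : ℕ} (n N : ℕ) (hn : 1 ≤ n) (hN : 1 ≤ N)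
    (α β γ ρ δmax : ℝ)
    (hα : 0 < α) (hβ : 0 < β) (hγ : 0 < γ) (hρ : 0 < ρ) (hδmax : 0 < δmax)
    (C0 : ℝ) (hC0 : 0 < C0)
    (A : Fin n → Matrix (Fin d) (Fin d) ℝ) (hA : ∀ i, matNorm (A i) ≤ α)
    (B : Fin n → Matrix (Fin d) (Fin m) ℝ) (hB : ∀ i, matNorm (B i) ≤ β)
    (x0 : Fin n → EuclideanSpace ℝ (Fin d)) (hx0 : ∀ i, ‖x0 i‖ ≤ γ)
    (P : Fin n → Matrix (Fin d) (Fin d) ℝ) (hPsd : ∀ i, (P i).PosSemidef)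
    (hPn : ∀ i, matNorm (P i) ≤ δmax * ∑ j ∈ range N, α ^ (2 * j))
    (R : Fin n → Matrix (Fin m) (Fin m) ℝ) (hR : ∀ i, (R i).PosSemidef)
    (H : Fin n → Matrix (Fin m) (Fin m) ℝ) (hH : ∀ i, (H i).IsHermitian)
    (u : Fin n → EuclideanSpace ℝ (Fin m)) (hu : ∀ i, ‖u i‖ ≤ Real.sqrt (C0 / ρ))
    (lam0 : ℝ)
    (hlam0 : lam0 = -(1 / C0) * ∑ i, ⟪u i, Matrix.toEuclideanLin ((B i)ᵀ * P i * A i) (x0 i)⟫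
      - (1 / C0) * ∑ i, ⟪u i, Matrix.toEuclideanLin ((B i)ᵀ * P i * B i + R i) (u i)⟫) :
    lam0 ≤ ((n : ℝ) / Real.sqrt (C0 * ρ)) * β * γ * δmax * ∑ t ∈ Icc 1 N, α ^ (2 * t - 1) :=
  stmt_10_general n N α β γ ρ δmax C0 hC0 A hA B hB x0 hx0 P hPsd hPn R hR u hu lam0 hlam0
end
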